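/- Let f be a network, M a symbolic steady state of f, and Z a component of G^θ(M) with vertex set V^Z. Then the function f^Z = π^Z ∘ F ∘ ρ^Z : X^Z → X^Z satisfies π^Z ∘ f|_M = f^Z ∘ π^Z|_M; consequently f^Z is an autonomous network module of f (with Y = M and I = V^Z). -/
import Mathlib


/-! Discrete regulatory networks (Siebert), shared definitions. -/

open Finset

namespace DRN

/-- A (regular) state of a network with `n` components, component `i`
ranging over `{0, …, pᵢ}` (encoded as `Fin (pᵢ + 1)`). -/
abbrev NState {n : ℕ} (p : Fin n → ℕ) := ∀ i, Fin (p i + 1)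

/-- An element of `X^□`: a tuple of finite sets of component values
(intended: discrete intervals), identified with the subset `M₁ × ⋯ × Mₙ` of `X`. -/
abbrev SymState {n : ℕ} (p : Fin n → ℕ) := ∀ i, Finset (Fin (p i + 1))

/-- `x` belongs to the subset of state space represented by `M`. -/
def memBox {n : ℕ} {p : Fin n → ℕ} (x : NState p) (M : SymState p) : Prop :=
  ∀ i, x i ∈ M i

/-- `M ∈ X^□`: every component of `M` is a (nonempty) discrete interval. -/
def IsBox {n : ℕ} {p : Fin n → ℕ} (M : SymState p) : Prop :=
  ∀ i, ∃ a b : Fin (p i + 1), a ≤ b ∧ M i = Finset.Icc a b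

/-- `M` is (identified with) a regular state: all components are singletons. -/
def IsRegular {n : ℕ} {p : Fin n → ℕ} (M : SymState p) : Prop :=
  ∀ i, (M i).card = 1

/-- The function `F : X^□ → X^□`, `F_i(M) = [min_{x∈M} f_i(x), max_{x∈M} f_i(x)]`. -/
noncomputable def Fop {n : ℕ} {p : Fin n → ℕ} (f : NState p → NState p)
    (M : SymState p) : SymState p :=
  fun i => Finset.Icc ((Fintype.piFinset M).inf fun x => f x i)
                      ((Fintype.piFinset M).sup fun x => f x i)

/-- A symbolic steady state: an element of `X^□ \ X` with `F(M) = M`. -/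
def IsSymSteady {n : ℕ} {p : Fin n → ℕ} (f : NState p → NState p)
    (M : SymState p) : Prop :=
  IsBox M ∧ ¬ IsRegular M ∧ Fop f M = M

/-- Edge of the asynchronous state transition graph `S(f)`. -/
def AsyncEdge {n : ℕ} {p : Fin n → ℕ} (f : NState p → NState p)
    (x x' : NState p) : Prop :=
  (x' = x ∧ f x = x) ∨
  ∃ i, f x i ≠ x i ∧ (∀ j, j ≠ i → x' j = x j) ∧
    ((x i < f x i ∧ (x' i : ℕ) = (x i : ℕ) + 1) ∨
     (f x i < x i ∧ (x' i : ℕ) + 1 = (x i : ℕ)))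

/-- A trap set of `S(f)`: a nonempty set that no trajectory ever leaves. -/
def IsTrapSet {n : ℕ} {p : Fin n → ℕ} (f : NState p → NState p)
    (D : Set (NState p)) : Prop :=
  D.Nonempty ∧ ∀ x ∈ D, ∀ x', AsyncEdge f x x' → x' ∈ D

/-- An attractor of `S(f)`: a trap set any two of whose states are joined by a path. -/
def IsAttractor {n : ℕ} {p : Fin n → ℕ} (f : NState p → NState p)
    (A : Set (NState p)) : Prop :=
  IsTrapSet f A ∧ ∀ x ∈ A, ∀ y ∈ A, Relation.ReflTransGen (AsyncEdge f) x y

/-- The sequence `M̃⁰ = M`, `M̃ᵏ_j = [min(M̃ᵏ⁻¹_j ∪ F_j(M̃ᵏ⁻¹)), max(M̃ᵏ⁻¹_j ∪ F_j(M̃ᵏ⁻¹))]`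
whose limit is the extended forward orbit of `M`. -/
noncomputable def efoSeq {n : ℕ} {p : Fin n → ℕ} (f : NState p → NState p)
    (M : SymState p) : ℕ → SymState p
  | 0 => M
  | k + 1 => fun j =>
      Finset.Icc ((efoSeq f M k j ∪ Fop f (efoSeq f M k) j).inf id)
                 ((efoSeq f M k j ∪ Fop f (efoSeq f M k) j).sup id)

/-- Signed edge `(i, j, ε)` of the global interaction graph `G(f)(Y)`
(for `Y = Set.univ` this is the global interaction graph `G(f)`). -/
def GEdge {n : ℕ} {p : Fin n → ℕ} (f : NState p → NState p) (Y : Set (NState p))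
    (i j : Fin n) (ε : ℤ) : Prop :=
  ∃ x ∈ Y, ∃ x' : NState p, ∃ c : ℤ, (c = 1 ∨ c = -1) ∧
    (∀ l, l ≠ i → x' l = x l) ∧ (((x' i : ℕ) : ℤ) = ((x i : ℕ) : ℤ) + c) ∧
    Int.sign (((f x' j : ℕ) : ℤ) - ((f x j : ℕ) : ℤ)) * c = ε

/-- Signed edge `(i, j, ε)` of `G(f|_M)`: both states involved must lie in `M`. -/
def GEdgeRestr {n : ℕ} {p : Fin n → ℕ} (f : NState p → NState p) (M : SymState p)
    (i j : Fin n) (ε : ℤ) : Prop :=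
  ∃ x x' : NState p, memBox x M ∧ memBox x' M ∧ ∃ c : ℤ, (c = 1 ∨ c = -1) ∧
    (∀ l, l ≠ i → x' l = x l) ∧ (((x' i : ℕ) : ℤ) = ((x i : ℕ) : ℤ) + c) ∧
    Int.sign (((f x' j : ℕ) : ℤ) - ((f x j : ℕ) : ℤ)) * c = ε

/-- `J(M)`: the set of symbolic-valued (non-singleton) components of `M`. -/
def JSet {n : ℕ} {p : Fin n → ℕ} (M : SymState p) : Set (Fin n) :=
  {i | 1 < (M i).card}

/-- Signed edge of `G^θ(M)`: an edge of `G(f|_M)` with both end-vertices in `J(M)`. -/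
def ThetaEdge {n : ℕ} {p : Fin n → ℕ} (f : NState p → NState p) (M : SymState p)
    (i j : Fin n) (ε : ℤ) : Prop :=
  i ∈ JSet M ∧ j ∈ JSet M ∧ GEdgeRestr f M i j ε

/-- Adjacency (some signed edge) in `G^θ(M)`. -/
def ThetaAdj {n : ℕ} {p : Fin n → ℕ} (f : NState p → NState p) (M : SymState p)
    (i j : Fin n) : Prop :=
  ∃ ε : ℤ, (ε = 1 ∨ ε = -1) ∧ ThetaEdge f M i j ε

/-- Weak connectivity in `G^θ(M)`. -/
def ThetaConn {n : ℕ} {p : Fin n → ℕ} (f : NState p → NState p) (M : SymState p) :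
    Fin n → Fin n → Prop :=
  Relation.ReflTransGen fun a b => ThetaAdj f M a b ∨ ThetaAdj f M b a

/-- `V` is the vertex set of a component (maximal weakly connected subgraph) of `G^θ(M)`;
since components are induced subgraphs, they are determined by their vertex sets. -/
def IsComponent {n : ℕ} {p : Fin n → ℕ} (f : NState p → NState p) (M : SymState p)
    (V : Set (Fin n)) : Prop :=
  ∃ i ∈ JSet M, V = {j | j ∈ JSet M ∧ ThetaConn f M i j}

/-- States of a network module with component set `V ⊆ {1,…,n}`
(vertices of `G(g)` renamed via the order-preserving bijection `ι`). -/
abbrev MState {n : ℕ} (p : Fin n → ℕ) (V : Set (Fin n)) := ∀ i : V, Fin (p i.1 + 1)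

/-- The projection `π^V` onto the components in `V`. -/
def projV {n : ℕ} {p : Fin n → ℕ} (V : Set (Fin n)) (x : NState p) : MState p V :=
  fun i => x i.1

open Classical in
/-- `ρ^V : X^V → X^□`, filling components outside `V` with `M_i`. -/
noncomputable def rhoV {n : ℕ} {p : Fin n → ℕ} (M : SymState p) (V : Set (Fin n))
    (z : MState p V) : SymState p :=
  fun i => if h : i ∈ V then {z ⟨i, h⟩} else M i

/-- The network module `f^V = π^V ∘ F ∘ ρ^V` derived from a component with vertex set `V`
(`Finset.inf _ id` extracts the unique element of the singleton `F_i(ρ^V(z))`). -/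
noncomputable def modFun {n : ℕ} {p : Fin n → ℕ} (f : NState p → NState p)
    (M : SymState p) (V : Set (Fin n)) (z : MState p V) : MState p V :=
  fun i => (Fop f (rhoV M V z) i.1).inf id

/-- `z` lies in the module state space `X^V = ∏_{i ∈ V} M_i`. -/
def memBoxV {n : ℕ} {p : Fin n → ℕ} (M : SymState p) (V : Set (Fin n))
    (z : MState p V) : Prop :=
  ∀ i : V, z i ∈ M i.1

/-- Edge of the asynchronous state transition graph `S(g)` of a module `g` with
state space `X^V = ∏_{i ∈ V} M_i`. -/
def ModAsyncEdge {n : ℕ} {p : Fin n → ℕ} (M : SymState p) (V : Set (Fin n))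
    (g : MState p V → MState p V) (z z' : MState p V) : Prop :=
  memBoxV M V z ∧ memBoxV M V z' ∧
  ((z' = z ∧ g z = z) ∨
   ∃ i : V, g z i ≠ z i ∧ (∀ l, l ≠ i → z' l = z l) ∧
     ((z i < g z i ∧ (z' i : ℕ) = (z i : ℕ) + 1) ∨
      (g z i < z i ∧ (z' i : ℕ) + 1 = (z i : ℕ))))

/-- Attractor of the state transition graph of a module with state space `X^V`. -/
def IsModAttractor {n : ℕ} {p : Fin n → ℕ} (M : SymState p) (V : Set (Fin n))
    (g : MState p V → MState p V) (A : Set (MState p V)) : Prop :=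
  A.Nonempty ∧ (∀ z ∈ A, memBoxV M V z) ∧
  (∀ z ∈ A, ∀ z', ModAsyncEdge M V g z z' → z' ∈ A) ∧
  ∀ z ∈ A, ∀ z' ∈ A, Relation.ReflTransGen (ModAsyncEdge M V g) z z'

/-- Edge of the product state transition graph `S^M` (Def. 4.1),
given the components `V 1, …, V m` of `G^θ(M)`. -/
noncomputable def SMEdge {n : ℕ} {p : Fin n → ℕ} (f : NState p → NState p)
    (M : SymState p) {m : ℕ} (V : Fin m → Set (Fin n)) (x1 x2 : NState p) : Prop :=
  memBox x1 M ∧ memBox x2 M ∧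
  ((x1 = x2 ∧ ∀ j, ModAsyncEdge M (V j) (modFun f M (V j))
      (projV (V j) x1) (projV (V j) x2)) ∨
   ∃ j, ModAsyncEdge M (V j) (modFun f M (V j)) (projV (V j) x1) (projV (V j) x2) ∧
     ∀ i, i ∉ V j → x1 i = x2 i)

/-- If `x` lies in the symbolic steady state box `M`, then `f x` does too. -/
lemma fMemM {n : ℕ} {p : Fin n → ℕ} {f : NState p → NState p} {M : SymState p}
    (hM : IsSymSteady f M) {x : NState p} (hx : memBox x M) (i : Fin n) :
    f x i ∈ M i := by
  have hx' : x ∈ Fintype.piFinset M := by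
    rw [Fintype.mem_piFinset]; exact hx
  have h1 : f x i ∈ Fop f M i := by
    rw [Fop, Finset.mem_Icc]
    exact ⟨Finset.inf_le hx', Finset.le_sup (f := fun x => f x i) hx'⟩
  rwa [hM.2.2] at h1

/-- One-step constancy: changing a coordinate outside the component `V` by one
unit (within `M`) does not change `f · i` for `i ∈ V`. -/
lemma stepConst {n : ℕ} {p : Fin n → ℕ} (f : NState p → NState p) (M : SymState p)
    (V : Set (Fin n)) (hV : IsComponent f M V) (i : Fin n) (hi : i ∈ V)
    (j : Fin n) (hjV : j ∉ V) (y y' : NState p) (hy : memBox y M) (hy' : memBox y' M)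
    (hupd : ∀ l, l ≠ j → y' l = y l) (c : ℤ) (hc : c = 1 ∨ c = -1)
    (hcj : ((y' j : ℕ) : ℤ) = ((y j : ℕ) : ℤ) + c) : f y' i = f y i := by
  by_contra hne
  obtain ⟨i₀, hi₀, hVeq⟩ := hV
  have hiV := hi
  rw [hVeq] at hiV
  obtain ⟨hiJ, hiconn⟩ := hiV
  set s : ℤ := ((f y' i : ℕ) : ℤ) - ((f y i : ℕ) : ℤ) with hs
  have hsne : s ≠ 0 := by
    intro h
    apply hne
    apply Fin.ext
    omega
  have hsgn : Int.sign s = 1 ∨ Int.sign s = -1 := by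
    rcases lt_trichotomy s 0 with h | h | h
    · right; exact Int.sign_eq_neg_one_of_neg h
    · exact absurd h hsne
    · left; exact Int.sign_eq_one_of_pos h
  set ε : ℤ := Int.sign s * c with hε
  have hεpm : ε = 1 ∨ ε = -1 := by
    rcases hsgn with h | h <;> rcases hc with rfl | rfl <;> simp [hε, h]
  have hedge : GEdgeRestr f M j i ε :=
    ⟨y, y', hy, hy', c, hc, hupd, hcj, rfl⟩
  have hjJ : j ∈ JSet M := by
    have hne' : y' j ≠ y j := by
      intro h
      have : ((y' j : ℕ) : ℤ) = ((y j : ℕ) : ℤ) := by rw [h]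
      omega
    exact Finset.one_lt_card.mpr ⟨y' j, hy' j, y j, hy j, hne'⟩
  have hadj : ThetaAdj f M j i := ⟨ε, hεpm, hjJ, hiJ, hedge⟩
  apply hjV
  rw [hVeq]
  exact ⟨hjJ, hiconn.tail (Or.inr hadj)⟩

/-- For `i ∈ V` a component of `G^θ(M)`, `f · i` is constant on each fiber of
`π^V` within `M`. -/
lemma constOn {n : ℕ} {p : Fin n → ℕ} (f : NState p → NState p) (M : SymState p)
    (hM : IsSymSteady f M) (V : Set (Fin n)) (hV : IsComponent f M V)
    (i : Fin n) (hi : i ∈ V) (x : NState p) (hx : memBox x M) :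
    ∀ y : NState p, memBox y M → (∀ j ∈ V, y j = x j) → f y i = f x i := by
  suffices H : ∀ d : ℕ, ∀ y : NState p, memBox y M → (∀ j ∈ V, y j = x j) →
      (∑ j, ((y j : ℕ) - (x j : ℕ) + ((x j : ℕ) - (y j : ℕ)))) = d →
      f y i = f x i by
    intro y hy hagree
    exact H _ y hy hagree rfl
  intro d
  induction d using Nat.strong_induction_on with
  | _ d ih =>
    intro y hy hagree hd
    by_cases hyx : y = x
    · rw [hyx]
    obtain ⟨j, hj⟩ : ∃ j, y j ≠ x j := by
      by_contra h
      push_neg at h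
      exact hyx (funext h)
    have hjV : j ∉ V := fun hjV => hj (hagree j hjV)
    obtain ⟨a, b, hab, hMj⟩ := hM.1 j
    have hyj : y j ∈ Finset.Icc a b := hMj ▸ hy j
    have hxj : x j ∈ Finset.Icc a b := hMj ▸ hx j
    rw [Finset.mem_Icc] at hyj hxj
    have hyjv : (a : ℕ) ≤ (y j : ℕ) ∧ (y j : ℕ) ≤ (b : ℕ) := ⟨hyj.1, hyj.2⟩
    have hxjv : (a : ℕ) ≤ (x j : ℕ) ∧ (x j : ℕ) ≤ (b : ℕ) := ⟨hxj.1, hxj.2⟩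
    have hjne : (y j : ℕ) ≠ (x j : ℕ) := fun h => hj (Fin.ext h)
    -- the new value of coordinate j: one step towards x j
    have hwlt : (if (y j : ℕ) < (x j : ℕ) then (y j : ℕ) + 1 else (y j : ℕ) - 1)
        < p j + 1 := by
      have := (y j).isLt
      have := (x j).isLt
      split <;> omega
    set w : Fin (p j + 1) :=
      ⟨if (y j : ℕ) < (x j : ℕ) then (y j : ℕ) + 1 else (y j : ℕ) - 1, hwlt⟩ with hw
    set y' : NState p := Function.update y j w with hy'def
    have hupd : ∀ l, l ≠ j → y' l = y l := fun l hl =>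
      Function.update_of_ne hl _ _
    have hy'j : y' j = w := Function.update_self _ _ _
    have hy'M : memBox y' M := by
      intro l
      by_cases hl : l = j
      · subst hl
        rw [hy'j, hMj, Finset.mem_Icc]
        constructor
        · rw [Fin.le_def]
          simp only [hw]
          split <;> omega
        · rw [Fin.le_def]
          simp only [hw]
          split <;> omega
      · rw [hupd l hl]; exact hy l
    set c : ℤ := if (y j : ℕ) < (x j : ℕ) then 1 else -1 with hcdef
    have hc : c = 1 ∨ c = -1 := by
      rw [hcdef]; split
      · left; rfl
      · right; rfl
    have hcj : ((y' j : ℕ) : ℤ) = ((y j : ℕ) : ℤ) + c := by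
      rw [hy'j, hcdef]
      simp only [hw]
      split <;> omega
    have hstep : f y' i = f y i :=
      stepConst f M V hV i hi j hjV y y' hy hy'M hupd c hc hcj
    have hagree' : ∀ l ∈ V, y' l = x l := by
      intro l hl
      rw [hupd l (fun h => hjV (h ▸ hl))]
      exact hagree l hl
    -- the distance strictly decreases
    have hdist : (∑ l, ((y' l : ℕ) - (x l : ℕ) + ((x l : ℕ) - (y' l : ℕ)))) + 1 = d := by
      rw [← hd]
      rw [← Finset.sum_erase_add _ _ (Finset.mem_univ j),
          ← Finset.sum_erase_add _ (fun l => ((y l : ℕ) - (x l : ℕ) + ((x l : ℕ) - (y l : ℕ))))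
            (Finset.mem_univ j)]
      have hsame : ∑ l ∈ Finset.univ.erase j, ((y' l : ℕ) - (x l : ℕ) + ((x l : ℕ) - (y' l : ℕ)))
          = ∑ l ∈ Finset.univ.erase j, ((y l : ℕ) - (x l : ℕ) + ((x l : ℕ) - (y l : ℕ))) := by
        apply Finset.sum_congr rfl
        intro l hl
        rw [hupd l (Finset.ne_of_mem_erase hl)]
      rw [hsame, hy'j]
      simp only [hw]
      split <;> omega
    have hlt : (∑ l, ((y' l : ℕ) - (x l : ℕ) + ((x l : ℕ) - (y' l : ℕ)))) < d := by omega
    rw [← hstep]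
    exact ih _ hlt y' hy'M hagree' rfl

/-- for a component `Z` of `G^θ(M)` with vertex set `V`, the function
`f^Z = π^Z ∘ F ∘ ρ^Z : X^Z → X^Z` satisfies `π^Z ∘ f|_M = f^Z ∘ π^Z|_M`;
consequently `f^Z` is an autonomous network module of `f` (with `Y = M`, `I = V`). -/
theorem stmt10 {n : ℕ} {p : Fin n → ℕ} (f : NState p → NState p) (M : SymState p)
    (hM : IsSymSteady f M) (V : Set (Fin n)) (hV : IsComponent f M V) :
    (∀ x : NState p, memBox x M → projV V (f x) = modFun f M V (projV V x)) ∧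
    (∀ z : MState p V, memBoxV M V z → memBoxV M V (modFun f M V z)) ∧
    (∀ i : V, ∃ a b : Fin (p i.1 + 1), a ≤ b ∧ M i.1 = Finset.Icc a b) := by
  refine ⟨?_, ?_, fun i => hM.1 i.1⟩
  · -- π^V ∘ f|_M = f^V ∘ π^V|_M
    intro x hx
    funext i
    have hboxmem : ∀ y ∈ Fintype.piFinset (rhoV M V (projV V x)),
        memBox y M ∧ ∀ j ∈ V, y j = x j := by
      intro y hy
      rw [Fintype.mem_piFinset] at hy
      constructor
      · intro l
        have := hy l
        by_cases hl : l ∈ V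
        · simp only [rhoV, dif_pos hl, Finset.mem_singleton] at this
          rw [this]
          exact hx l
        · simpa [rhoV, dif_neg hl] using this
      · intro j hj
        have := hy j
        simpa [rhoV, dif_pos hj, projV] using this
    have hxmem : x ∈ Fintype.piFinset (rhoV M V (projV V x)) := by
      rw [Fintype.mem_piFinset]
      intro l
      by_cases hl : l ∈ V
      · simp [rhoV, dif_pos hl, projV]
      · simpa [rhoV, dif_neg hl] using hx l
    have hconst : ∀ y ∈ Fintype.piFinset (rhoV M V (projV V x)), f y i.1 = f x i.1 := by
      intro y hy
      obtain ⟨hyM, hag⟩ := hboxmem y hy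
      exact constOn f M hM V hV i.1 i.2 x hx y hyM hag
    have hinf : (Fintype.piFinset (rhoV M V (projV V x))).inf (fun y => f y i.1)
        = f x i.1 := by
      apply le_antisymm
      · exact Finset.inf_le hxmem
      · exact Finset.le_inf fun y hy => le_of_eq (hconst y hy).symm
    have hsup : (Fintype.piFinset (rhoV M V (projV V x))).sup (fun y => f y i.1)
        = f x i.1 := by
      apply le_antisymm
      · exact Finset.sup_le fun y hy => le_of_eq (hconst y hy)
      · exact Finset.le_sup (f := fun y => f y i.1) hxmem
    show f x i.1 = (Fop f (rhoV M V (projV V x)) i.1).inf id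
    rw [Fop, hinf, hsup, Finset.Icc_self, Finset.inf_singleton, id]
  · -- f^V maps X^V into itself
    intro z hz
    intro i
    have hboxmem : ∀ y ∈ Fintype.piFinset (rhoV M V z), memBox y M := by
      intro y hy
      rw [Fintype.mem_piFinset] at hy
      intro l
      have := hy l
      by_cases hl : l ∈ V
      · simp only [rhoV, dif_pos hl, Finset.mem_singleton] at this
        rw [this]
        exact hz ⟨l, hl⟩
      · simpa [rhoV, dif_neg hl] using this
    have hne : (Fintype.piFinset (rhoV M V z)).Nonempty := by
      rw [Fintype.piFinset_nonempty]
      intro l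
      by_cases hl : l ∈ V
      · simp [rhoV, dif_pos hl]
      · obtain ⟨a, b, hab, hMl⟩ := hM.1 l
        simp only [rhoV, dif_neg hl, hMl]
        exact Finset.nonempty_Icc.mpr hab
    obtain ⟨x0, hx0⟩ := hne
    set B := Fintype.piFinset (rhoV M V z) with hB
    set cc : Fin (p i.1 + 1) := B.inf (fun y => f y i.1) with hcc
    set dd : Fin (p i.1 + 1) := B.sup (fun y => f y i.1) with hdd
    have hcd : cc ≤ dd := le_trans (Finset.inf_le hx0) (Finset.le_sup (f := fun y => f y i.1) hx0)
    have hmodeq : modFun f M V z i = cc := by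
      show (Fop f (rhoV M V z) i.1).inf id = cc
      rw [Fop]
      apply le_antisymm
      · exact Finset.inf_le (Finset.mem_Icc.mpr ⟨le_rfl, hcd⟩)
      · exact Finset.le_inf fun w hw => (Finset.mem_Icc.mp hw).1
    rw [hmodeq]
    obtain ⟨a, b, hab, hMi⟩ := hM.1 i.1
    rw [hMi, Finset.mem_Icc]
    constructor
    · apply Finset.le_inf
      intro y hy
      have := fMemM hM (hboxmem y hy) i.1
      rw [hMi, Finset.mem_Icc] at this
      exact this.1
    · refine le_trans (Finset.inf_le hx0) ?_
      have := fMemM hM (hboxmem x0 hx0) i.1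
      rw [hMi, Finset.mem_Icc] at this
      exact this.2

end DRN
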